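/- arXiv:math/0410117 — 3 statements merged into one kernel-verified Lean document; each statement's English description precedes it below -/
import Mathlib

section
/- Let p(t) = a_0 + a_1 t + ... + a_δ t^δ be a polynomial of degree δ ≥ 1 with complex coefficients and leading coefficient a_δ ≠ 0. Then for any real T ≥ 1, the number of integers t with |p(t)| ≤ T is at most C_δ · (1 + (T/|a_δ|)^(1/δ)) for some constant C_δ depending only on δ. -/
open Polynomial

private lemma ms_pow_le (R : ℝ) (hR : 0 ≤ R) (s : Multiset ℝ) (h : ∀ x ∈ s, R ≤ x) :
    R ^ Multiset.card s ≤ s.prod := by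
  induction s using Multiset.induction with
  | empty => simp
  | cons a t ih =>
    simp only [Multiset.card_cons, Multiset.prod_cons, pow_succ']
    exact mul_le_mul (h a (Multiset.mem_cons_self a t))
      (ih fun x hx => h x (Multiset.mem_cons_of_mem hx))
      (pow_nonneg hR _) (le_trans hR (h a (Multiset.mem_cons_self a t)))

private lemma ms_pow_lt (R : ℝ) (hR : 0 < R) (s : Multiset ℝ) (hs : s ≠ 0)
    (h : ∀ x ∈ s, R < x) : R ^ Multiset.card s < s.prod := by
  obtain ⟨a, ha⟩ := Multiset.exists_mem_of_ne_zero hs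
  obtain ⟨t, rfl⟩ := Multiset.exists_cons_of_mem ha
  have ha : R < a := h a (Multiset.mem_cons_self a t)
  have ht : R ^ Multiset.card t ≤ t.prod :=
    ms_pow_le R hR.le t fun x hx => (h x (Multiset.mem_cons_of_mem hx)).le
  calc R ^ Multiset.card (a ::ₘ t) = R * R ^ Multiset.card t := by
        rw [Multiset.card_cons, pow_succ']
    _ < a * R ^ Multiset.card t :=
        mul_lt_mul_of_pos_right ha (pow_pos hR _)
    _ ≤ a * t.prod := mul_le_mul_of_nonneg_left ht (hR.trans ha).le
    _ = (a ::ₘ t).prod := (Multiset.prod_cons a t).symm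

theorem stmt_0 (δ : ℕ) (hδ : 1 ≤ δ) :
    ∃ C : ℝ, ∀ (p : Polynomial ℂ), p.natDegree = δ → p ≠ 0 →
      ∀ T : ℝ, 1 ≤ T →
        {t : ℤ | ‖p.eval (t : ℂ)‖ ≤ T}.Finite ∧
        (({t : ℤ | ‖p.eval (t : ℂ)‖ ≤ T}.ncard : ℝ)
          ≤ C * (1 + (T / ‖p.leadingCoeff‖) ^ ((1 : ℝ) / δ))) := by
  refine ⟨3 * δ, fun p hdeg hp T hT => ?_⟩
  have hδ0 : (δ : ℝ) ≠ 0 := by positivity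
  set a : ℝ := ‖p.leadingCoeff‖ with ha_def
  have ha : 0 < a := by
    simpa [ha_def] using (Polynomial.leadingCoeff_ne_zero.mpr hp)
  set R : ℝ := (T / a) ^ ((1 : ℝ) / δ) with hR_def
  have hTa : 0 < T / a := div_pos (lt_of_lt_of_le one_pos hT) ha
  have hR : 0 < R := Real.rpow_pos_of_pos hTa _
  have hRδ : R ^ δ = T / a := by
    rw [hR_def, ← Real.rpow_natCast ((T / a) ^ ((1 : ℝ) / δ)) δ,
      ← Real.rpow_mul hTa.le, one_div_mul_cancel hδ0, Real.rpow_one]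
  -- splitting of p over ℂ
  have hsplit : Splits p := IsAlgClosed.splits p
  have hcard : Multiset.card p.roots = δ := by
    rw [← hdeg]; exact (Polynomial.splits_iff_card_roots.mp hsplit)
  have hroots0 : p.roots ≠ 0 := by
    intro h; rw [h] at hcard; simp at hcard; omega
  -- key: every t in our set is close to a root
  set S := {t : ℤ | ‖p.eval (t : ℂ)‖ ≤ T} with hS_def
  have key : ∀ t : ℤ, t ∈ S → ∃ z ∈ p.roots, |(t : ℝ) - z.re| ≤ R := by
    intro t ht
    have heval : ‖p.eval (t : ℂ)‖ =
        a * ((p.roots.map fun z => ‖(t : ℂ) - z‖).prod) := by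
      rw [hsplit.eval_eq_prod_roots, norm_mul, ← ha_def]
      congr 1
      have := map_multiset_prod (normHom : ℂ →*₀ ℝ) (p.roots.map fun z => (t : ℂ) - z)
      simpa [Multiset.map_map] using this
    have hprod : ((p.roots.map fun z => ‖(t : ℂ) - z‖).prod) ≤ T / a := by
      rw [le_div_iff₀ ha, mul_comm]
      calc a * _ = ‖p.eval (t : ℂ)‖ := heval.symm
        _ ≤ T := ht
    by_contra hcon
    push_neg at hcon
    have hall : ∀ x ∈ p.roots.map fun z => ‖(t : ℂ) - z‖, R < x := by
      intro x hx
      obtain ⟨z, hz, rfl⟩ := Multiset.mem_map.mp hx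
      have h1 : |(t : ℝ) - z.re| ≤ ‖(t : ℂ) - z‖ := by
        have := Complex.abs_re_le_norm ((t : ℂ) - z)
        simpa using this
      have h2 : R < |(t : ℝ) - z.re| := hcon z hz
      linarith
    have hlt := ms_pow_lt R hR _ (by simpa using hroots0) hall
    rw [Multiset.card_map, hcard, hRδ] at hlt
    linarith
  -- intervals around roots
  set I : ℂ → Finset ℤ := fun z => Finset.Icc ⌈z.re - R⌉ ⌊z.re + R⌋ with hI_def
  have hsub : S ⊆ ↑(p.roots.toFinset.biUnion I) := by
    intro t ht
    obtain ⟨z, hz, hzt⟩ := key t ht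
    simp only [Finset.coe_biUnion, Set.mem_iUnion]
    refine ⟨z, by simpa using Multiset.mem_toFinset.mpr hz, ?_⟩
    rw [abs_le] at hzt
    simp only [hI_def, Finset.coe_Icc, Set.mem_Icc]
    constructor
    · exact Int.ceil_le.mpr (by linarith)
    · exact Int.le_floor.mpr (by linarith)
  have hfin : S.Finite := Set.Finite.subset (Finset.finite_toSet _) hsub
  refine ⟨hfin, ?_⟩
  have hIcard : ∀ z : ℂ, ((I z).card : ℝ) ≤ 2 * R + 1 := by
    intro z
    rw [hI_def]
    simp only [Int.card_Icc]
    have hx : ((⌊z.re + R⌋ + 1 - ⌈z.re - R⌉).toNat : ℤ) =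
        max (⌊z.re + R⌋ + 1 - ⌈z.re - R⌉) 0 := Int.toNat_eq_max _
    have h2 : ((⌊z.re + R⌋ : ℤ) : ℝ) ≤ z.re + R := Int.floor_le _
    have h3 : z.re - R ≤ ((⌈z.re - R⌉ : ℤ) : ℝ) := Int.le_ceil _
    calc ((⌊z.re + R⌋ + 1 - ⌈z.re - R⌉).toNat : ℝ)
        = (((⌊z.re + R⌋ + 1 - ⌈z.re - R⌉).toNat : ℤ) : ℝ) := by norm_cast
      _ = ((max (⌊z.re + R⌋ + 1 - ⌈z.re - R⌉) 0 : ℤ) : ℝ) := by rw [hx]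
      _ ≤ 2 * R + 1 := by
          push_cast
          refine max_le ?_ (by linarith)
          linarith
  have hncard : (S.ncard : ℝ) ≤ (p.roots.toFinset.biUnion I).card := by
    have h := Set.ncard_le_ncard hsub (Finset.finite_toSet _)
    rw [Set.ncard_coe_finset] at h
    exact_mod_cast h
  have hbU : ((p.roots.toFinset.biUnion I).card : ℝ) ≤ (δ : ℝ) * (2 * R + 1) := by
    calc ((p.roots.toFinset.biUnion I).card : ℝ)
        ≤ ((∑ z ∈ p.roots.toFinset, (I z).card : ℕ) : ℝ) := by
          exact_mod_cast Finset.card_biUnion_le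
      _ = ∑ z ∈ p.roots.toFinset, ((I z).card : ℝ) := by push_cast; ring
      _ ≤ ∑ _z ∈ p.roots.toFinset, (2 * R + 1) :=
          Finset.sum_le_sum fun z _ => hIcard z
      _ = (p.roots.toFinset.card : ℝ) * (2 * R + 1) := by
          rw [Finset.sum_const, nsmul_eq_mul]
      _ ≤ (δ : ℝ) * (2 * R + 1) := by
          have : p.roots.toFinset.card ≤ δ := by
            rw [← hcard]; exact Multiset.toFinset_card_le _
          have h21 : (0 : ℝ) ≤ 2 * R + 1 := by linarith
          exact mul_le_mul_of_nonneg_right (by exact_mod_cast this) h21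
  calc (S.ncard : ℝ) ≤ (δ : ℝ) * (2 * R + 1) := hncard.trans hbU
    _ ≤ 3 * δ * (1 + R) := by nlinarith [(Nat.one_le_cast (α := ℝ)).mpr hδ, hR.le]
end

section
/- Let D be a positive integer and Q_1, Q_2, Q_3 rational polynomials of the form Q_i(Z) = A_i + (B_i Z + C_i Z²)/D with A_i, B_i, C_i ∈ ℤ. Fix λ a positive divisor of D and write D = λμ. Then the set of integers Z with gcd(Z, D) = λ and Q_1(Z), Q_2(Z), Q_3(Z) all integers is either empty or equal to the set of integers Z with gcd(Z, D) = λ lying in a single residue class Z ≡ Z_λ (mod D_λ) for some integer Z_λ and some divisor D_λ of D. -/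
lemma int_dvd_lcm_left (a b : ℤ) : a ∣ (Int.lcm a b : ℤ) := by
  rw [Int.lcm]
  exact dvd_trans (Int.dvd_natAbs.mpr dvd_rfl)
    (Int.natCast_dvd_natCast.mpr (Nat.dvd_lcm_left _ _))

lemma int_dvd_lcm_right (a b : ℤ) : b ∣ (Int.lcm a b : ℤ) := by
  rw [Int.lcm]
  exact dvd_trans (Int.dvd_natAbs.mpr dvd_rfl)
    (Int.natCast_dvd_natCast.mpr (Nat.dvd_lcm_right _ _))

lemma int_lcm_dvd {a b c : ℤ} (ha : a ∣ c) (hb : b ∣ c) : (Int.lcm a b : ℤ) ∣ c :=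
  Int.dvd_natAbs.mp (Int.natCast_dvd_natCast.mpr
    (Int.lcm_dvd (Int.dvd_natAbs.mpr ha) (Int.dvd_natAbs.mpr hb)))

/-- Abstract form of the key lemma. -/
lemma key_lin' (a b z z0 g a' m : ℤ) (hg : g ≠ 0) (ha' : a = g * a')
    (hm : g * m ≠ 0) (hcop : IsCoprime m a') (h0 : g * m ∣ b + a * z0) :
    g * m ∣ b + a * z ↔ m ∣ z - z0 := by
  subst ha'
  constructor
  · intro h
    have hdvd : g * m ∣ g * a' * (z - z0) := by
      have hsub := dvd_sub h h0
      have heq : b + g * a' * z - (b + g * a' * z0) = g * a' * (z - z0) := by ring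
      rwa [heq] at hsub
    obtain ⟨t, ht⟩ := hdvd
    have ht' : g * (a' * (z - z0)) = g * (m * t) := by linarith [ht]
    have h2 : a' * (z - z0) = m * t := mul_left_cancel₀ hg ht'
    exact hcop.dvd_of_dvd_mul_left ⟨t, h2⟩
  · rintro ⟨t, ht⟩
    have heq : b + g * a' * z = (b + g * a' * z0) + (g * m) * (a' * t) := by
      have hz : z = z0 + m * t := by linarith
      rw [hz]; ring
    rw [heq]
    exact dvd_add h0 (Dvd.intro _ rfl)

/-- Key linear congruence lemma: solutions to `μ ∣ b + a * z` form a single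
residue class mod `μ / gcd a μ`, given one solution `z0`. -/
lemma key_lin (μ a b z z0 : ℤ) (hμ : 0 < μ) (h0 : μ ∣ b + a * z0) :
    μ ∣ b + a * z ↔ (μ / Int.gcd a μ) ∣ z - z0 := by
  have hgpos : 0 < (Int.gcd a μ : ℤ) := by
    exact_mod_cast Int.gcd_pos_of_ne_zero_right a hμ.ne'
  obtain ⟨a', ha'⟩ : (Int.gcd a μ : ℤ) ∣ a := Int.gcd_dvd_left _ _
  obtain ⟨m, hm⟩ : (Int.gcd a μ : ℤ) ∣ μ := Int.gcd_dvd_right _ _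
  have hmeq : μ / Int.gcd a μ = m := by
    have h := Int.mul_ediv_cancel_left m hgpos.ne'
    rwa [← hm] at h
  have ha'' : a / Int.gcd a μ = a' := by
    have h := Int.mul_ediv_cancel_left a' hgpos.ne'
    rwa [← ha'] at h
  have hcop : IsCoprime m a' := by
    have h1 : Int.gcd (a / Int.gcd a μ) (μ / Int.gcd a μ) = 1 :=
      Int.gcd_div_gcd_div_gcd (Int.gcd_pos_of_ne_zero_right a hμ.ne')
    rw [ha'', hmeq] at h1
    exact Int.isCoprime_iff_gcd_eq_one.mpr (by rwa [Int.gcd_comm])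
  rw [hmeq]
  have h0' : (Int.gcd a μ : ℤ) * m ∣ b + a * z0 := by rw [← hm]; exact h0
  have hne : (Int.gcd a μ : ℤ) * m ≠ 0 := by rw [← hm]; exact hμ.ne'
  have hiff := key_lin' a b z z0 _ a' m hgpos.ne' ha' hne hcop h0'
  rw [← hm] at hiff
  exact hiff

theorem stmt_6 (D : ℤ) (hD : 0 < D) (A B C : Fin 3 → ℤ)
    (lam : ℤ) (hlam : 0 < lam) (hdvd : lam ∣ D) :
    {Z : ℤ | (Int.gcd Z D : ℤ) = lam ∧ ∀ i, D ∣ (B i * Z + C i * Z ^ 2)} = ∅ ∨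
    ∃ (Zlam Dlam : ℤ), Dlam ∣ D ∧
      {Z : ℤ | (Int.gcd Z D : ℤ) = lam ∧ ∀ i, D ∣ (B i * Z + C i * Z ^ 2)} =
      {Z : ℤ | (Int.gcd Z D : ℤ) = lam ∧ Z ≡ Zlam [ZMOD Dlam]} := by
  set S := {Z : ℤ | (Int.gcd Z D : ℤ) = lam ∧ ∀ i, D ∣ (B i * Z + C i * Z ^ 2)} with hSdef
  by_cases hS : S = ∅
  · exact Or.inl hS
  right
  obtain ⟨Z0, hZ0⟩ := Set.nonempty_iff_ne_empty.mpr hS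
  set μ := D / lam with hμdef
  have hDeq : D = lam * μ := by
    rw [hμdef, Int.mul_ediv_cancel' hdvd]
  have hμpos : 0 < μ := by
    rw [hμdef]; exact Int.ediv_pos_of_pos_of_dvd hD hlam.le hdvd
  set d : Fin 3 → ℤ := fun i => lam * (μ / Int.gcd (C i * lam) μ) with hddef
  have hdD : ∀ i, d i ∣ D := by
    intro i
    rw [hDeq]
    exact mul_dvd_mul_left lam (Int.ediv_dvd_of_dvd (Int.gcd_dvd_right _ _))
  set Dlam : ℤ := (Int.lcm (d 0) (Int.lcm (d 1) (d 2)) : ℤ) with hDlamdef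
  have hDlamD : Dlam ∣ D := by
    rw [hDlamdef]
    exact int_lcm_dvd (hdD 0) (int_lcm_dvd (hdD 1) (hdD 2))
  have hdvdDlam : ∀ i, d i ∣ Dlam := by
    intro i
    rw [hDlamdef]
    fin_cases i
    · exact int_dvd_lcm_left _ _
    · exact dvd_trans (int_dvd_lcm_left _ _) (int_dvd_lcm_right _ _)
    · exact dvd_trans (int_dvd_lcm_right _ _) (int_dvd_lcm_right _ _)
  refine ⟨Z0, Dlam, hDlamD, ?_⟩
  have hmem : ∀ Z : ℤ, (Int.gcd Z D : ℤ) = lam →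
      ((∀ i, D ∣ (B i * Z + C i * Z ^ 2)) ↔ ∀ i, μ ∣ B i + (C i * lam) * (Z / lam)) := by
    intro Z hg
    have hlZ : lam ∣ Z := hg ▸ Int.gcd_dvd_left _ _
    obtain ⟨z, hz⟩ := hlZ
    have hzq : Z / lam = z := by rw [hz]; exact Int.mul_ediv_cancel_left _ hlam.ne'
    rw [hzq]
    have hcop : IsCoprime μ z := by
      have hgne : Int.gcd Z D ≠ 0 := by
        intro h; rw [h] at hg; exact hlam.ne' (by exact_mod_cast hg.symm)
      have h1 : Int.gcd (Z / Int.gcd Z D) (D / Int.gcd Z D) = 1 :=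
        Int.gcd_div_gcd_div_gcd (Nat.pos_of_ne_zero hgne)
      rw [hg, hzq, ← hμdef] at h1
      exact Int.isCoprime_iff_gcd_eq_one.mpr (by rwa [Int.gcd_comm])
    constructor
    · intro h i
      have hi := h i
      have heq : B i * Z + C i * Z ^ 2 = lam * (z * (B i + C i * lam * z)) := by
        rw [hz]; ring
      rw [heq, hDeq] at hi
      have h2 : μ ∣ z * (B i + C i * lam * z) :=
        (mul_dvd_mul_iff_left hlam.ne').mp hi
      exact hcop.dvd_of_dvd_mul_left h2
    · intro h i
      have heq : B i * Z + C i * Z ^ 2 = lam * (z * (B i + C i * lam * z)) := by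
        rw [hz]; ring
      rw [heq, hDeq]
      exact mul_dvd_mul_left lam (Dvd.dvd.mul_left (h i) z)
  have hZ0g : (Int.gcd Z0 D : ℤ) = lam := hZ0.1
  have hZ0c : ∀ i, μ ∣ B i + (C i * lam) * (Z0 / lam) := (hmem Z0 hZ0g).mp hZ0.2
  ext Z
  simp only [hSdef, Set.mem_setOf_eq]
  constructor
  · rintro ⟨hg, hc⟩
    refine ⟨hg, ?_⟩
    have hc' := (hmem Z hg).mp hc
    rw [Int.modEq_iff_dvd]
    have hdvdall : ∀ i, d i ∣ Z - Z0 := by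
      intro i
      have hlZ : lam ∣ Z := hg ▸ Int.gcd_dvd_left _ _
      have hlZ0 : lam ∣ Z0 := hZ0g ▸ Int.gcd_dvd_left _ _
      have h1 : (μ / Int.gcd (C i * lam) μ) ∣ (Z / lam - Z0 / lam) :=
        (key_lin μ (C i * lam) (B i) (Z / lam) (Z0 / lam) hμpos (hZ0c i)).mp (hc' i)
      have h2 : Z - Z0 = lam * (Z / lam - Z0 / lam) := by
        rw [mul_sub, Int.mul_ediv_cancel' hlZ, Int.mul_ediv_cancel' hlZ0]
      rw [h2, hddef]
      exact mul_dvd_mul_left lam h1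
    have hall : Dlam ∣ Z - Z0 := by
      rw [hDlamdef]
      exact int_lcm_dvd (hdvdall 0) (int_lcm_dvd (hdvdall 1) (hdvdall 2))
    exact dvd_sub_comm.mp hall
  · rintro ⟨hg, hc⟩
    refine ⟨hg, ?_⟩
    rw [hmem Z hg]
    intro i
    have hdd : d i ∣ Z - Z0 :=
      dvd_trans (hdvdDlam i) (dvd_sub_comm.mp (Int.modEq_iff_dvd.mp hc))
    have hlZ : lam ∣ Z := hg ▸ Int.gcd_dvd_left _ _
    have hlZ0 : lam ∣ Z0 := hZ0g ▸ Int.gcd_dvd_left _ _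
    have h2 : Z - Z0 = lam * (Z / lam - Z0 / lam) := by
      rw [mul_sub, Int.mul_ediv_cancel' hlZ, Int.mul_ediv_cancel' hlZ0]
    rw [h2, hddef] at hdd
    have h3 : (μ / Int.gcd (C i * lam) μ) ∣ (Z / lam - Z0 / lam) :=
      (mul_dvd_mul_iff_left hlam.ne').mp hdd
    exact (key_lin μ (C i * lam) (B i) (Z / lam) (Z0 / lam) hμpos (hZ0c i)).mpr h3
end

section
/- Let k be a field and A = k[[z_1, z_2]]/(γ_1, ..., γ_s) where γ_1, ..., γ_s are monomials in z_1, z_2 of degree at most j, with maximal ideal m. Let z_1^μ and z_2^ν be the highest powers of z_1 and z_2 respectively dividing all of the γ_i. If A has Krull dimension 1, then for every n ≥ 2j, dim_{A/m} (m^n / m^{n+1}) = μ + ν. -/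
open MvPowerSeries

namespace Stmt11Aux

variable {k : Type*} [Field k]

lemma fin2_eq (c : Fin 2 →₀ ℕ) : c = Finsupp.single 0 (c 0) + Finsupp.single 1 (c 1) := by
  ext a
  fin_cases a <;> simp [Finsupp.single_apply]

lemma deg_sum (c : Fin 2 →₀ ℕ) : c.sum (fun _ e => e) = c 0 + c 1 := by
  rw [Finsupp.sum_fintype _ _ (fun _ => rfl), Fin.sum_univ_two]

lemma le_iff2 {c c' : Fin 2 →₀ ℕ} : c ≤ c' ↔ c 0 ≤ c' 0 ∧ c 1 ≤ c' 1 := by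
  rw [Finsupp.le_def]
  constructor
  · exact fun h => ⟨h 0, h 1⟩
  · rintro ⟨h0, h1⟩ a; fin_cases a <;> assumption

lemma deg_mono {c c' : Fin 2 →₀ ℕ} (h : c ≤ c') : c 0 + c 1 ≤ c' 0 + c' 1 := by
  obtain ⟨h0, h1⟩ := le_iff2.mp h; omega

lemma eq_of_le_of_deg {c c' : Fin 2 →₀ ℕ} (h : c ≤ c') (hd : c 0 + c 1 = c' 0 + c' 1) :
    c = c' := by
  obtain ⟨h0, h1⟩ := le_iff2.mp h
  have e0 : c 0 = c' 0 := by omega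
  have e1 : c 1 = c' 1 := by omega
  rw [fin2_eq c, fin2_eq c', e0, e1]

lemma mem_max_iff (f : MvPowerSeries (Fin 2) k) :
    f ∈ IsLocalRing.maximalIdeal (MvPowerSeries (Fin 2) k) ↔ constantCoeff f = 0 := by
  rw [IsLocalRing.mem_maximalIdeal, mem_nonunits_iff]
  constructor
  · intro h
    by_contra h0
    exact h (isUnit_iff_constantCoeff.mpr (isUnit_iff_ne_zero.mpr h0))
  · intro h hu
    rw [isUnit_iff_constantCoeff, h] at hu
    exact not_isUnit_zero hu

lemma monomial_one_mem_pow (c : Fin 2 →₀ ℕ) :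
    (monomial c 1 : MvPowerSeries (Fin 2) k)
      ∈ (IsLocalRing.maximalIdeal (MvPowerSeries (Fin 2) k)) ^ (c 0 + c 1) := by
  have hX : ∀ i : Fin 2, (X i : MvPowerSeries (Fin 2) k)
      ∈ IsLocalRing.maximalIdeal (MvPowerSeries (Fin 2) k) := by
    intro i
    rw [mem_max_iff, constantCoeff_X]
  have hmono : (monomial c 1 : MvPowerSeries (Fin 2) k) = X 0 ^ (c 0) * X 1 ^ (c 1) := by
    rw [X_pow_eq, X_pow_eq, monomial_mul_monomial, one_mul, ← fin2_eq]
  rw [hmono, pow_add]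
  exact Ideal.mul_mem_mul (Ideal.pow_mem_pow (hX 0) _) (Ideal.pow_mem_pow (hX 1) _)

/-- The ideal of power series all of whose coefficients in total degree `< n` vanish. -/
def Vdeg (k : Type*) [Field k] (n : ℕ) : Ideal (MvPowerSeries (Fin 2) k) where
  carrier := {f | ∀ c : Fin 2 →₀ ℕ, c 0 + c 1 < n → coeff c f = 0}
  add_mem' := fun {a b} ha hb c hc => by rw [map_add, ha c hc, hb c hc, add_zero]
  zero_mem' := fun c _ => map_zero _
  smul_mem' := by
    intro g f hf c hc
    rw [smul_eq_mul, coeff_mul]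
    apply Finset.sum_eq_zero
    rintro ⟨u, v⟩ huv
    rw [Finset.HasAntidiagonal.mem_antidiagonal] at huv
    have h0 : u 0 + v 0 = c 0 := by rw [← huv]; simp
    have h1 : u 1 + v 1 = c 1 := by rw [← huv]; simp
    have hv : v 0 + v 1 < n := by omega
    rw [hf v hv, mul_zero]

lemma mem_Vdeg_iff {n : ℕ} {f : MvPowerSeries (Fin 2) k} :
    f ∈ Vdeg k n ↔ ∀ c : Fin 2 →₀ ℕ, c 0 + c 1 < n → coeff c f = 0 := Iff.rfl

lemma pow_le_Vdeg (n : ℕ) :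
    (IsLocalRing.maximalIdeal (MvPowerSeries (Fin 2) k)) ^ n ≤ Vdeg k n := by
  induction n with
  | zero => exact fun f _ c hc => absurd hc (Nat.not_lt_zero _)
  | succ n ih =>
    rw [pow_succ]
    refine Ideal.mul_le.mpr fun r hr s hs => ?_
    intro c hc
    rw [coeff_mul]
    apply Finset.sum_eq_zero
    rintro ⟨u, v⟩ huv
    rw [Finset.HasAntidiagonal.mem_antidiagonal] at huv
    have h0 : u 0 + v 0 = c 0 := by rw [← huv]; simp
    have h1 : u 1 + v 1 = c 1 := by rw [← huv]; simp
    rcases lt_or_ge (u 0 + u 1) n with h | h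
    · rw [ih hr u h, zero_mul]
    · have hv0 : v 0 = 0 := by omega
      have hv1 : v 1 = 0 := by omega
      have hv : v = 0 := by rw [fin2_eq v, hv0, hv1]; simp
      rw [hv, coeff_zero_eq_constantCoeff, (mem_max_iff s).mp hs, mul_zero]

lemma Vdeg_le_pow (n : ℕ) :
    Vdeg k n ≤ (IsLocalRing.maximalIdeal (MvPowerSeries (Fin 2) k)) ^ n := by
  intro f hf
  rw [mem_Vdeg_iff] at hf
  classical
  set mo : ℕ → (Fin 2 →₀ ℕ) := fun a => Finsupp.single 0 a + Finsupp.single 1 (n - a) with hmo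
  have hmo0 : ∀ a, mo a 0 = a := by intro a; simp [hmo, Finsupp.single_apply]
  have hmo1 : ∀ a, mo a 1 = n - a := by intro a; simp [hmo, Finsupp.single_apply]
  set g : ℕ → MvPowerSeries (Fin 2) k := fun a c =>
    if min ((c + mo a) 0) n = a then coeff (c + mo a) f else 0 with hg
  have hgc : ∀ a c, coeff c (g a) =
      if min ((c + mo a) 0) n = a then coeff (c + mo a) f else 0 := fun a c => rfl
  have hdecomp : f = ∑ a ∈ Finset.range (n + 1), monomial (mo a) 1 * g a := by
    ext c
    rw [map_sum]
    symm
    by_cases hc : c 0 + c 1 < n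
    · rw [hf c hc]
      apply Finset.sum_eq_zero
      intro a ha
      rw [Finset.mem_range] at ha
      rw [coeff_monomial_mul]
      split
      next h =>
        exfalso
        have hd := deg_mono h
        rw [hmo0, hmo1] at hd
        omega
      next => rfl
    · push_neg at hc
      set a0 := min (c 0) n with ha0
      have hle : mo a0 ≤ c := by
        rw [le_iff2, hmo0, hmo1]
        omega
      rw [Finset.sum_eq_single a0]
      · rw [coeff_monomial_mul, if_pos hle, one_mul, hgc, tsub_add_cancel_of_le hle,
          if_pos ha0.symm]
      · intro b hb hba
        rw [coeff_monomial_mul]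
        split
        next h =>
          rw [hgc, tsub_add_cancel_of_le h, ← ha0]
          rw [if_neg (fun hh => hba hh.symm), one_mul]
        next => rfl
      · intro h
        exact absurd (Finset.mem_range.mpr (by omega)) h
  rw [hdecomp]
  apply Ideal.sum_mem
  intro a ha
  rw [Finset.mem_range] at ha
  apply Ideal.mul_mem_right
  have hmem := monomial_one_mem_pow (k := k) (mo a)
  rw [hmo0, hmo1] at hmem
  have hna : a + (n - a) = n := by omega
  rwa [hna] at hmem

variable {s : ℕ}

/-- The ideal of power series supported on monomials divisible by some `d i`. -/
def suppDiv (d : Fin s → (Fin 2 →₀ ℕ)) : Ideal (MvPowerSeries (Fin 2) k) where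
  carrier := {f | ∀ c, coeff c f ≠ 0 → ∃ i, d i ≤ c}
  zero_mem' := fun c hc => absurd (map_zero _) hc
  add_mem' := fun {a b} ha hb c hc => by
    by_cases h : coeff c a ≠ 0
    · exact ha c h
    · push_neg at h
      refine hb c ?_
      rw [map_add, h, zero_add] at hc
      exact hc
  smul_mem' := by
    intro g f hf c hc
    rw [smul_eq_mul, coeff_mul] at hc
    obtain ⟨p, hp, hne⟩ := Finset.exists_ne_zero_of_sum_ne_zero hc
    rw [Finset.HasAntidiagonal.mem_antidiagonal] at hp
    obtain ⟨i, hi⟩ := hf p.2 (right_ne_zero_of_mul hne)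
    exact ⟨i, hi.trans (by rw [← hp]; exact le_add_self)⟩

lemma span_le_suppDiv (d : Fin s → (Fin 2 →₀ ℕ)) :
    Ideal.span (Set.range fun i => monomial (d i) (1:k)) ≤ suppDiv d := by
  rw [Ideal.span_le]
  rintro _ ⟨i, rfl⟩
  intro c hc
  rw [coeff_monomial] at hc
  refine ⟨i, ?_⟩
  by_cases h : c = d i
  · rw [h]
  · rw [if_neg h] at hc; exact absurd rfl hc

lemma monomial_mem_span {d : Fin s → (Fin 2 →₀ ℕ)} {c : Fin 2 →₀ ℕ} {i : Fin s}
    (h : d i ≤ c) (r : k) :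
    monomial c r ∈ Ideal.span (Set.range fun i => monomial (d i) (1:k)) := by
  have heq : monomial c r = monomial (c - d i) r * monomial (d i) 1 := by
    rw [monomial_mul_monomial, mul_one, tsub_add_cancel_of_le h]
  rw [heq]
  exact Ideal.mul_mem_left _ _ (Ideal.subset_span ⟨i, rfl⟩)

lemma coeff_zero_of_mem_sup {d : Fin s → (Fin 2 →₀ ℕ)} {n : ℕ} {f : MvPowerSeries (Fin 2) k}
    (hf : f ∈ Vdeg k (n + 1) ⊔ Ideal.span (Set.range fun i => monomial (d i) (1:k)))
    (c : Fin 2 →₀ ℕ) (hc : c 0 + c 1 ≤ n) (hnd : ∀ i, ¬ d i ≤ c) : coeff c f = 0 := by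
  obtain ⟨g, hg, h, hh, rfl⟩ := Submodule.mem_sup.mp hf
  rw [map_add, mem_Vdeg_iff.mp hg c (by omega), zero_add]
  by_contra h0
  obtain ⟨i, hi⟩ := span_le_suppDiv d hh c h0
  exact hnd i hi

lemma mem_sup_of_coeff {d : Fin s → (Fin 2 →₀ ℕ)} {n : ℕ} {f : MvPowerSeries (Fin 2) k}
    (h : ∀ c : Fin 2 →₀ ℕ, c 0 + c 1 ≤ n → (∀ i, ¬ d i ≤ c) → coeff c f = 0) :
    f ∈ Vdeg k (n + 1) ⊔ Ideal.span (Set.range fun i => monomial (d i) (1:k)) := by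
  classical
  set B : Fin 2 →₀ ℕ := Finsupp.single 0 n + Finsupp.single 1 n with hB
  have hB0 : B 0 = n := by simp [hB, Finsupp.single_apply]
  have hB1 : B 1 = n := by simp [hB, Finsupp.single_apply]
  set F : Finset (Fin 2 →₀ ℕ) := (Finset.Iic B).filter (fun c => ∃ i, d i ≤ c) with hF
  set h' : MvPowerSeries (Fin 2) k := ∑ c ∈ F, monomial c (coeff c f) with hh'
  have hcoeff : ∀ c, coeff c h' = if c ∈ F then coeff c f else 0 := by
    intro c
    rw [hh', map_sum]
    rw [Finset.sum_congr rfl (fun c' _ => coeff_monomial c c' _)]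
    exact Finset.sum_ite_eq F c _
  have hI : h' ∈ Ideal.span (Set.range fun i => monomial (d i) (1:k)) := by
    apply Ideal.sum_mem
    intro c hc
    rw [hF, Finset.mem_filter] at hc
    obtain ⟨i, hi⟩ := hc.2
    exact monomial_mem_span hi _
  have hV : f - h' ∈ Vdeg k (n + 1) := by
    rw [mem_Vdeg_iff]
    intro c hc
    rw [map_sub, hcoeff]
    by_cases hdiv : ∃ i, d i ≤ c
    · have hmem : c ∈ F := by
        rw [hF, Finset.mem_filter, Finset.mem_Iic]
        exact ⟨le_iff2.mpr ⟨by omega, by omega⟩, hdiv⟩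
      rw [if_pos hmem, sub_self]
    · push_neg at hdiv
      have h0 : coeff c f = 0 := h c (by omega) hdiv
      have hmem : c ∉ F := by
        rw [hF, Finset.mem_filter]
        rintro ⟨-, i, hi⟩
        exact hdiv i hi
      rw [if_neg hmem, h0, sub_zero]
  have hfeq : f = (f - h') + h' := by ring
  rw [hfeq]
  exact Submodule.add_mem_sup hV hI

end Stmt11Aux

set_option maxHeartbeats 1000000 in
theorem stmt_11 (k : Type*) [Field k] (s j μ ν : ℕ) (d : Fin s → (Fin 2 →₀ ℕ))
    (hdeg : ∀ i, (d i).sum (fun _ e => e) ≤ j)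
    (hμ : IsGreatest {m : ℕ | ∀ i, m ≤ d i 0} μ)
    (hν : IsGreatest {m : ℕ | ∀ i, m ≤ d i 1} ν)
    (A : Type*) [CommRing A]
    (e : (MvPowerSeries (Fin 2) k ⧸
      Ideal.span (Set.range fun i => MvPowerSeries.monomial (d i) (1 : k))) ≃+* A)
    (hdim : ringKrullDim A = 1)
    (m : Ideal A) (hm : m.IsMaximal) :
    ∀ n : ℕ, 2 * j ≤ n →
      Module.finrank (A ⧸ m) (↥(m ^ n) ⧸ (m • (⊤ : Submodule A ↥(m ^ n)))) = μ + ν := by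
  intro n hn
  classical
  set I := Ideal.span (Set.range fun i => MvPowerSeries.monomial (d i) (1:k)) with hIdef
  set φ : MvPowerSeries (Fin 2) k →+* A := e.toRingHom.comp (Ideal.Quotient.mk I) with hφ
  have hφs : Function.Surjective φ := e.surjective.comp Ideal.Quotient.mk_surjective
  have hker : RingHom.ker φ = I := by
    ext x
    simp only [RingHom.mem_ker, hφ, RingHom.comp_apply, RingEquiv.toRingHom_eq_coe,
      RingHom.coe_coe]
    rw [EmbeddingLike.map_eq_zero_iff]
    exact Ideal.Quotient.eq_zero_iff_mem
  haveI : Nontrivial A :=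
    ⟨⟨0, 1, fun h01 => hm.ne_top ((Ideal.eq_top_iff_one m).mpr (h01 ▸ m.zero_mem))⟩⟩
  haveI : IsLocalRing A := IsLocalRing.of_surjective' φ hφs
  haveI := hm
  have hM : Ideal.comap φ m = IsLocalRing.maximalIdeal (MvPowerSeries (Fin 2) k) :=
    IsLocalRing.eq_maximalIdeal (Ideal.comap_isMaximal_of_surjective φ hφs)
  have hmap : Ideal.map φ (IsLocalRing.maximalIdeal (MvPowerSeries (Fin 2) k)) = m := by
    rw [← hM, Ideal.map_comap_of_surjective φ hφs]
  have hMV : ∀ t, (IsLocalRing.maximalIdeal (MvPowerSeries (Fin 2) k)) ^ t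
      = Stmt11Aux.Vdeg k t :=
    fun t => le_antisymm (Stmt11Aux.pow_le_Vdeg t) (Stmt11Aux.Vdeg_le_pow t)
  have hcomap : ∀ t, Ideal.comap φ (m ^ t) = Stmt11Aux.Vdeg k t ⊔ I := by
    intro t
    rw [← hmap, ← Ideal.map_pow, Ideal.comap_map_of_surjective φ hφs,
      ← RingHom.ker_eq_comap_bot, hker, hMV]
  -- combinatorial facts
  obtain ⟨i₀, hi₀⟩ : ∃ i, d i 0 = μ := by
    by_contra h
    push_neg at h
    have hmem : μ + 1 ∈ {m : ℕ | ∀ i, m ≤ d i 0} := fun i => by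
      have h1 := hμ.1 i
      have h2 := h i
      omega
    have := hμ.2 hmem
    omega
  obtain ⟨i₁, hi₁⟩ : ∃ i, d i 1 = ν := by
    by_contra h
    push_neg at h
    have hmem : ν + 1 ∈ {m : ℕ | ∀ i, m ≤ d i 1} := fun i => by
      have h1 := hν.1 i
      have h2 := h i
      omega
    have := hν.2 hmem
    omega
  have hdeg0 := hdeg i₀
  rw [Stmt11Aux.deg_sum] at hdeg0
  have hdeg1 := hdeg i₁
  rw [Stmt11Aux.deg_sum] at hdeg1
  have hν0 := hν.1 i₀
  have hμ1 := hμ.1 i₁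
  have hj : μ + ν ≤ j := by omega
  have hdiv : ∀ c : Fin 2 →₀ ℕ, c 0 + c 1 = n → μ ≤ c 0 → ν ≤ c 1 → ∃ i, d i ≤ c := by
    intro c hcn h0 h1
    rcases le_or_gt j (c 1) with h | h
    · exact ⟨i₀, Stmt11Aux.le_iff2.mpr ⟨by omega, by omega⟩⟩
    · exact ⟨i₁, Stmt11Aux.le_iff2.mpr ⟨by omega, by omega⟩⟩
  have hnd : ∀ c : Fin 2 →₀ ℕ, (c 0 < μ ∨ c 1 < ν) → ∀ i, ¬ d i ≤ c := by
    intro c hc i hle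
    obtain ⟨h0, h1⟩ := Stmt11Aux.le_iff2.mp hle
    have hμi := hμ.1 i
    have hνi := hν.1 i
    omega
  set E : (Fin μ ⊕ Fin ν) → (Fin 2 →₀ ℕ) := Sum.elim
    (fun a => Finsupp.single 0 (a : ℕ) + Finsupp.single 1 (n - (a : ℕ)))
    (fun b => Finsupp.single 0 (n - (b : ℕ)) + Finsupp.single 1 (b : ℕ)) with hE
  have hE0 : ∀ c, E c 0
      = Sum.elim (fun a : Fin μ => (a : ℕ)) (fun b : Fin ν => n - (b : ℕ)) c := by
    rintro (a | b) <;> simp [hE, Finsupp.single_apply]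
  have hE1 : ∀ c, E c 1
      = Sum.elim (fun a : Fin μ => n - (a : ℕ)) (fun b : Fin ν => (b : ℕ)) c := by
    rintro (a | b) <;> simp [hE, Finsupp.single_apply]
  have hEdeg : ∀ c, E c 0 + E c 1 = n := by
    rintro (a | b)
    · have ha := a.isLt
      rw [hE0, hE1]
      simp only [Sum.elim_inl]
      omega
    · have hb := b.isLt
      rw [hE0, hE1]
      simp only [Sum.elim_inr]
      omega
  have hEstd : ∀ c, E c 0 < μ ∨ E c 1 < ν := by
    rintro (a | b)
    · left; rw [hE0]; simpa using a.isLt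
    · right; rw [hE1]; simpa using b.isLt
  have hEinj : Function.Injective E := by
    rintro (a | a) (b | b) h
    · have h0 : E (Sum.inl a) 0 = E (Sum.inl b) 0 := by rw [h]
      rw [hE0, hE0] at h0
      simp only [Sum.elim_inl] at h0
      exact congrArg Sum.inl (Fin.ext h0)
    · exfalso
      have h0 : E (Sum.inl a) 0 = E (Sum.inr b) 0 := by rw [h]
      have h1 : E (Sum.inl a) 1 = E (Sum.inr b) 1 := by rw [h]
      rw [hE0, hE0] at h0
      rw [hE1, hE1] at h1
      simp only [Sum.elim_inl, Sum.elim_inr] at h0 h1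
      have ha := a.isLt
      have hb := b.isLt
      omega
    · exfalso
      have h0 : E (Sum.inr a) 0 = E (Sum.inl b) 0 := by rw [h]
      have h1 : E (Sum.inr a) 1 = E (Sum.inl b) 1 := by rw [h]
      rw [hE0, hE0] at h0
      rw [hE1, hE1] at h1
      simp only [Sum.elim_inl, Sum.elim_inr] at h0 h1
      have ha := a.isLt
      have hb := b.isLt
      omega
    · have h1 : E (Sum.inr a) 1 = E (Sum.inr b) 1 := by rw [h]
      rw [hE1, hE1] at h1
      simp only [Sum.elim_inr] at h1
      exact congrArg Sum.inr (Fin.ext h1)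
  -- the candidate basis vectors
  have hvmem : ∀ c, φ (MvPowerSeries.monomial (E c) 1) ∈ m ^ n := by
    intro c
    have h1 := Stmt11Aux.monomial_one_mem_pow (k := k) (E c)
    rw [hEdeg c] at h1
    have h2 := Ideal.mem_map_of_mem φ h1
    rwa [Ideal.map_pow, hmap] at h2
  set xv : (Fin μ ⊕ Fin ν) → ↥(m ^ n) :=
    fun c => ⟨φ (MvPowerSeries.monomial (E c) 1), hvmem c⟩ with hxv
  set v : (Fin μ ⊕ Fin ν) → (↥(m ^ n) ⧸ (m • (⊤ : Submodule A ↥(m ^ n)))) :=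
    fun c => Submodule.Quotient.mk (xv c) with hv
  have hsm : ∀ z : ↥(m ^ n), z ∈ (m • (⊤ : Submodule A ↥(m ^ n))) ↔ (z : A) ∈ m ^ (n + 1) := by
    intro z
    have hmap2 : Submodule.map (m ^ n).subtype (m • (⊤ : Submodule A ↥(m ^ n)))
        = m • (m ^ n : Ideal A) := by
      rw [Submodule.map_smul'', Submodule.map_subtype_top]
    constructor
    · intro hz
      have h2 : (z : A) ∈ Submodule.map (m ^ n).subtype (m • ⊤) := ⟨z, hz, rfl⟩
      rwa [hmap2, Ideal.smul_eq_mul, ← pow_succ'] at h2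
    · intro hz
      have h2 : (z : A) ∈ Submodule.map (m ^ n).subtype (m • ⊤) := by
        rw [hmap2, Ideal.smul_eq_mul, ← pow_succ']
        exact hz
      obtain ⟨w, hw, hwz⟩ := h2
      rwa [show w = z from Subtype.ext hwz] at hw
  have hmkzero : ∀ (f : MvPowerSeries (Fin 2) k) (hf : φ f ∈ m ^ n),
      (Submodule.Quotient.mk (⟨φ f, hf⟩ : ↥(m ^ n))
        : ↥(m ^ n) ⧸ (m • (⊤ : Submodule A ↥(m ^ n)))) = 0
        ↔ f ∈ Stmt11Aux.Vdeg k (n + 1) ⊔ I := by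
    intro f hf
    rw [Submodule.Quotient.mk_eq_zero, hsm, ← hcomap (n + 1)]
    exact Ideal.mem_comap.symm
  have hmksum : ∀ (w : (Fin μ ⊕ Fin ν) → MvPowerSeries (Fin 2) k),
      (∑ i, (Ideal.Quotient.mk m (φ (w i))) • v i : ↥(m ^ n) ⧸ (m • (⊤ : Submodule A ↥(m ^ n))))
        = Submodule.Quotient.mk
            (⟨φ (∑ i, w i * MvPowerSeries.monomial (E i) 1), by
              rw [map_sum]
              exact Submodule.sum_mem _ fun i _ => by
                rw [map_mul]
                exact Ideal.mul_mem_left _ _ (hvmem i)⟩ : ↥(m ^ n)) := by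
    intro w
    have h1 : ∀ i, (Ideal.Quotient.mk m (φ (w i))) • v i
        = Submodule.Quotient.mk ((φ (w i)) • xv i) := by
      intro i
      rw [hv]
      exact Module.Quotient.mk_smul_mk _ _ _ _
    rw [Finset.sum_congr rfl fun i _ => h1 i]
    simp only [← Submodule.mkQ_apply]
    rw [← map_sum]
    congr 1
    apply Subtype.ext
    push_cast
    rw [map_sum]
    apply Finset.sum_congr rfl
    intro i _
    rw [map_mul]
    rfl
  -- linear independence
  have hli : LinearIndependent (A ⧸ m) v := by
    rw [Fintype.linearIndependent_iff]
    intro g hg c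
    have hlift : ∀ i, ∃ r : MvPowerSeries (Fin 2) k, Ideal.Quotient.mk m (φ r) = g i := by
      intro i
      obtain ⟨a, ha⟩ := Ideal.Quotient.mk_surjective (g i)
      obtain ⟨r, hr⟩ := hφs a
      exact ⟨r, by rw [hr, ha]⟩
    choose r hr using hlift
    rw [Finset.sum_congr rfl fun i _ => by rw [← hr i]] at hg
    rw [hmksum r, hmkzero] at hg
    have hcoeff := Stmt11Aux.coeff_zero_of_mem_sup hg (E c) (le_of_eq (hEdeg c))
      (hnd _ (hEstd c))
    rw [map_sum] at hcoeff
    rw [Finset.sum_eq_single c] at hcoeff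
    · rw [MvPowerSeries.coeff_mul_monomial, if_pos le_rfl, tsub_self, mul_one,
        MvPowerSeries.coeff_zero_eq_constantCoeff] at hcoeff
      have hrc : r c ∈ IsLocalRing.maximalIdeal (MvPowerSeries (Fin 2) k) :=
        (Stmt11Aux.mem_max_iff _).mpr hcoeff
      have hφrc : φ (r c) ∈ m := by
        have h3 := Ideal.mem_map_of_mem φ hrc
        rwa [hmap] at h3
      rw [← hr c, Ideal.Quotient.eq_zero_iff_mem]
      exact hφrc
    · intro b _ hbc
      rw [MvPowerSeries.coeff_mul_monomial, if_neg]
      intro hle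
      exact hbc (hEinj (Stmt11Aux.eq_of_le_of_deg hle (by rw [hEdeg, hEdeg])))
    · intro hc
      exact absurd (Finset.mem_univ c) hc
  -- spanning
  have hsp : ⊤ ≤ Submodule.span (A ⧸ m) (Set.range v) := by
    rintro q -
    obtain ⟨x, rfl⟩ := Submodule.Quotient.mk_surjective _ q
    have hxmem : (x : A) ∈ Ideal.map φ ((IsLocalRing.maximalIdeal (MvPowerSeries (Fin 2) k)) ^ n) := by
      rw [Ideal.map_pow, hmap]
      exact x.2
    obtain ⟨f, hfM, hfx⟩ := (Ideal.mem_map_iff_of_surjective φ hφs).mp hxmem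
    rw [Submodule.mem_span_range_iff_exists_fun]
    refine ⟨fun c => Ideal.Quotient.mk m
      (φ (MvPowerSeries.C (MvPowerSeries.coeff (E c) f))), ?_⟩
    rw [hmksum]
    set G : MvPowerSeries (Fin 2) k :=
      ∑ i, MvPowerSeries.C (MvPowerSeries.coeff (E i) f)
        * MvPowerSeries.monomial (E i) 1 with hG
    have hGmem : φ G ∈ m ^ n := by
      rw [hG, map_sum]
      exact Submodule.sum_mem _ fun i _ => by
        rw [map_mul]
        exact Ideal.mul_mem_left _ _ (hvmem i)
    rw [← sub_eq_zero, ← Submodule.Quotient.mk_sub]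
    have hsub : ((⟨φ G, hGmem⟩ : ↥(m ^ n)) - x)
        = (⟨φ (G - f), by
            rw [map_sub, hfx]
            exact Submodule.sub_mem _ hGmem x.2⟩ : ↥(m ^ n)) := by
      apply Subtype.ext
      push_cast
      rw [map_sub, hfx]
    rw [hsub, hmkzero]
    apply Stmt11Aux.mem_sup_of_coeff
    intro c' hc' hndc'
    rw [map_sub]
    have hfVn : f ∈ Stmt11Aux.Vdeg k n := (hMV n) ▸ hfM
    rcases lt_or_eq_of_le hc' with hlt | heq
    · rw [Stmt11Aux.mem_Vdeg_iff.mp hfVn c' hlt, sub_zero, hG, map_sum]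
      apply Finset.sum_eq_zero
      intro i _
      rw [MvPowerSeries.coeff_C_mul, MvPowerSeries.coeff_monomial, if_neg, mul_zero]
      intro hcE
      rw [hcE] at hlt
      rw [hEdeg i] at hlt
      exact lt_irrefl n hlt
    · have h01 : c' 0 < μ ∨ c' 1 < ν := by
        by_contra hcon
        push_neg at hcon
        obtain ⟨i, hi⟩ := hdiv c' heq hcon.1 hcon.2
        exact hndc' i hi
      obtain ⟨c₀, hEc₀⟩ : ∃ c₀, E c₀ = c' := by
        rcases h01 with h0 | h1
        · refine ⟨Sum.inl ⟨c' 0, h0⟩, ?_⟩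
          rw [hE]
          simp only [Sum.elim_inl]
          have hc1 : n - c' 0 = c' 1 := by omega
          rw [hc1, ← Stmt11Aux.fin2_eq]
        · refine ⟨Sum.inr ⟨c' 1, h1⟩, ?_⟩
          rw [hE]
          simp only [Sum.elim_inr]
          have hc0 : n - c' 1 = c' 0 := by omega
          rw [hc0, ← Stmt11Aux.fin2_eq]
      rw [hG, map_sum, Finset.sum_eq_single c₀]
      · rw [MvPowerSeries.coeff_C_mul, MvPowerSeries.coeff_monomial, if_pos hEc₀.symm,
          mul_one, hEc₀, sub_self]
      · intro b _ hbc
        rw [MvPowerSeries.coeff_C_mul, MvPowerSeries.coeff_monomial, if_neg, mul_zero]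
        intro hcE
        exact hbc (hEinj (hEc₀.trans hcE)).symm
      · intro hc
        exact absurd (Finset.mem_univ c₀) hc
  let b : Module.Basis (Fin μ ⊕ Fin ν) (A ⧸ m) (↥(m ^ n) ⧸ (m • (⊤ : Submodule A ↥(m ^ n)))) :=
    Module.Basis.mk hli hsp
  rw [Module.finrank_eq_card_basis b]
  simp
end
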